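/- arXiv:2202.01774 — 3 statements merged into one kernel-verified Lean document; each statement's English description precedes it below -/
import Mathlib

section
/- Let P be a finite multiset of vectors in ℝⁿ and suppose there exists v ∈ ℝⁿ with ⟨v, λ⟩ > 0 for all λ ∈ P. Then the map π : (ℝ_{≥0})^P → ℝⁿ, (x_λ) ↦ μ + Σ_λ x_λ λ, is a proper map for any μ ∈ ℝⁿ. -/
/-!
Pairing with `v` gives `x i * ⟪v, lam i⟫ ≤ ⟪v, π x - μ⟫` for nonnegative `x`. On a compact `K`
the right-hand side is bounded above, so `π ⁻¹' K` is a closed subset of a box `∏ i, [0, Cᵢ]`.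
-/

open scoped RealInnerProductSpace

section

variable {ι E : Type*} [Fintype ι] [NormedAddCommGroup E] [InnerProductSpace ℝ E]

theorem mul_inner_le_inner_sum_smul {lam : ι → E} {v : E} (hv : ∀ i, 0 ≤ ⟪v, lam i⟫)
    {x : ι → ℝ} (hx : ∀ i, 0 ≤ x i) (i : ι) :
    x i * ⟪v, lam i⟫ ≤ ⟪v, ∑ j, x j • lam j⟫ := by
  simp only [inner_sum, real_inner_smul_right]
  exact Finset.single_le_sum (fun j _ => mul_nonneg (hx j) (hv j)) (Finset.mem_univ i)

theorem isCompact_nonneg_setOf_add_sum_smul_mem {lam : ι → E} {v : E}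
    (hv : ∀ i, 0 < ⟪v, lam i⟫) (μ : E) {K : Set E} (hK : IsCompact K) :
    IsCompact {x : ι → ℝ | (∀ i, 0 ≤ x i) ∧ μ + ∑ i, x i • lam i ∈ K} := by
  have hcont : Continuous fun x : ι → ℝ => μ + ∑ i, x i • lam i := by fun_prop
  have hclosed : IsClosed {x : ι → ℝ | (∀ i, 0 ≤ x i) ∧ μ + ∑ i, x i • lam i ∈ K} :=
    (isClosed_Ici (a := (0 : ι → ℝ))).inter (hK.isClosed.preimage hcont)
  obtain ⟨C, hC⟩ := hK.bddAbove_image (f := fun y => ⟪v, y - μ⟫)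
    (continuous_const.inner (continuous_id.sub continuous_const)).continuousOn
  refine IsCompact.of_isClosed_subset
    (isCompact_univ_pi fun i => isCompact_Icc (a := 0) (b := C / ⟪v, lam i⟫)) hclosed ?_
  rintro x ⟨hx, hxK⟩ i -
  refine ⟨hx i, (le_div_iff₀ (hv i)).2 ?_⟩
  calc x i * ⟪v, lam i⟫ ≤ ⟪v, ∑ j, x j • lam j⟫ :=
        mul_inner_le_inner_sum_smul (fun j => (hv j).le) hx i
    _ = ⟪v, (μ + ∑ j, x j • lam j) - μ⟫ := by rw [add_sub_cancel_left]
    _ ≤ C := hC ⟨_, hxK, rfl⟩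

end

/-- If a finite family of vectors `λ i` in `ℝⁿ` all have positive inner product with some
vector `v` (i.e. they lie in an open half-space), then for any `μ` the map
`π : (ℝ_{≥0})^P → ℝⁿ`, `(x_λ) ↦ μ + Σ_λ x_λ • λ`, is proper. -/
theorem cone_map_proper {n : ℕ} {ι : Type*} [Fintype ι]
    (lam : ι → EuclideanSpace ℝ (Fin n)) (v : EuclideanSpace ℝ (Fin n))
    (hv : ∀ i, 0 < ⟪v, lam i⟫) (μ : EuclideanSpace ℝ (Fin n)) :
    IsProperMap (fun x : {x : ι → ℝ // ∀ i, 0 ≤ x i} =>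
      μ + ∑ i, x.1 i • lam i) := by
  rw [isProperMap_iff_isCompact_preimage]
  refine ⟨(show Continuous fun x : ι → ℝ => μ + ∑ i, x i • lam i by fun_prop).comp
    continuous_subtype_val, fun K hK => ?_⟩
  rw [Topology.IsEmbedding.subtypeVal.isCompact_iff]
  convert isCompact_nonneg_setOf_add_sum_smul_mem hv μ hK using 1
  ext x
  exact ⟨fun ⟨y, hyK, hyx⟩ => hyx ▸ ⟨y.2, hyK⟩, fun ⟨hx, hxK⟩ => ⟨⟨x, hx⟩, hxK, rfl⟩⟩
end

section
/- Let f be a locally finite measure on ℝⁿ supported inside a pointed (salient) closed convex cone C translated by some vector, and suppose f is invariant under translation by some nonzero vector ν ∈ ℝⁿ. Then f = 0. -/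
/-!
Translation invariance moves the support condition along the whole orbit: `f` is carried by
`μ + m • ν + C` and by `μ - m • ν + C` for every `m : ℕ`. A point `x` in all of these sets gives
`(x - μ) / m ± ν ∈ C`, and letting `m → ∞` in the closed cone yields `ν, -ν ∈ C`, contradicting
pointedness when `ν ≠ 0`. So `f`-almost every point lies in an empty set, and `f = 0`.
-/

open MeasureTheory Filter Topology
open scoped Pointwise

theorem IsClosed.mem_of_forall_add_nsmul_mem {E : Type*} [AddCommMonoid E] [Module ℝ E]
    [TopologicalSpace E] [ContinuousAdd E] [ContinuousSMul ℝ E] {C : Set E} (hclosed : IsClosed C)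
    (hcone : ∀ x ∈ C, ∀ t : ℝ, 0 ≤ t → t • x ∈ C) {y v : E} (h : ∀ m : ℕ, y + m • v ∈ C) :
    v ∈ C := by
  have hrescaled : ∀ m : ℕ, 1 ≤ m → (m : ℝ)⁻¹ • y + v ∈ C := by
    intro m hm
    have hm0 : (m : ℝ) ≠ 0 := by positivity
    have := hcone _ (h m) (m : ℝ)⁻¹ (by positivity)
    rwa [smul_add, ← Nat.cast_smul_eq_nsmul ℝ, smul_smul, inv_mul_cancel₀ hm0, one_smul] at this
  have hlim : Tendsto (fun m : ℕ => (m : ℝ)⁻¹ • y + v) atTop (𝓝 v) := by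
    simpa using ((tendsto_inv_atTop_nhds_zero_nat (𝕜 := ℝ)).smul_const y).add_const v
  exact hclosed.mem_of_tendsto hlim (eventually_atTop.mpr ⟨1, hrescaled⟩)

theorem neg_add_mem_of_mem_singleton_add {G : Type*} [AddGroup G] {s : Set G} {a x : G}
    (hx : x ∈ {a} + s) : -a + x ∈ s := by
  rw [Set.singleton_add] at hx
  obtain ⟨c, hc, rfl⟩ := hx
  simpa using hc

theorem Measure.map_add_neg_eq_self {G : Type*} [AddGroup G] [MeasurableSpace G]
    [MeasurableAdd G] {f : Measure G} {ν : G} (hinv : Measure.map (· + ν) f = f) :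
    Measure.map (· + -ν) f = f := by
  have hpres : MeasurePreserving (MeasurableEquiv.addRight ν) f f :=
    ⟨measurable_add_const ν, hinv⟩
  have := (hpres.symm _).map_eq
  rw [MeasurableEquiv.symm_addRight] at this
  exact this

theorem Measure.ae_add_nsmul_of_map_add_eq {M : Type*} [AddMonoid M] [MeasurableSpace M]
    [MeasurableAdd M] {f : Measure M} {ν : M} (hinv : Measure.map (· + ν) f = f) {p : M → Prop}
    (hp : ∀ᵐ x ∂f, p x) (m : ℕ) : ∀ᵐ x ∂f, p (x + m • ν) := by
  have hpres : MeasurePreserving (· + ν) f f := ⟨measurable_add_const ν, hinv⟩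
  simpa only [add_right_iterate] using (hpres.iterate m).quasiMeasurePreserving.ae hp

theorem measure_in_pointed_cone_translation_invariant_eq_zero_general {n : ℕ}
    (f : Measure (EuclideanSpace ℝ (Fin n)))
    (C : Set (EuclideanSpace ℝ (Fin n)))
    (hcone : ∀ x ∈ C, ∀ t : ℝ, 0 ≤ t → t • x ∈ C)
    (hclosed : IsClosed C)
    (hpointed : ∀ x ∈ C, -x ∈ C → x = 0)
    (μ : EuclideanSpace ℝ (Fin n))
    (hsupp : f (({μ} + C)ᶜ) = 0)
    (ν : EuclideanSpace ℝ (Fin n)) (hν : ν ≠ 0)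
    (hinv : Measure.map (fun x => x + ν) f = f) :
    f = 0 := by
  have hae : ∀ᵐ x ∂f, x ∈ {μ} + C := mem_ae_iff.mpr hsupp
  have horbit : ∀ᵐ x ∂f, ∀ m : ℕ, x + m • ν ∈ {μ} + C ∧ x + m • -ν ∈ {μ} + C :=
    ae_all_iff.mpr fun m => (Measure.ae_add_nsmul_of_map_add_eq hinv hae m).and
      (Measure.ae_add_nsmul_of_map_add_eq (Measure.map_add_neg_eq_self hinv) hae m)
  have hempty : ∀ᵐ _x ∂f, False := horbit.mono fun x hx => by
    have hmem (v : EuclideanSpace ℝ (Fin n)) (h : ∀ m : ℕ, x + m • v ∈ {μ} + C) : v ∈ C :=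
      hclosed.mem_of_forall_add_nsmul_mem hcone (y := -μ + x) fun m => by
        simpa only [add_assoc] using neg_add_mem_of_mem_singleton_add (h m)
    exact hν (hpointed ν (hmem ν fun m => (hx m).1) (hmem (-ν) fun m => (hx m).2))
  exact ae_eq_bot.mp (eventually_false_iff_eq_bot.mp hempty)

/-- A locally finite measure on `ℝⁿ` supported inside a translate `μ + C` of a pointed
(salient) closed convex cone `C`, and invariant under translation by some nonzero
vector `ν`, must vanish. -/
theorem measure_in_pointed_cone_translation_invariant_eq_zero {n : ℕ}
    (f : Measure (EuclideanSpace ℝ (Fin n))) [IsLocallyFiniteMeasure f]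
    (C : Set (EuclideanSpace ℝ (Fin n)))
    (hconv : Convex ℝ C) (hcone : ∀ x ∈ C, ∀ t : ℝ, 0 ≤ t → t • x ∈ C)
    (hclosed : IsClosed C)
    (hpointed : ∀ x ∈ C, -x ∈ C → x = 0)
    (μ : EuclideanSpace ℝ (Fin n))
    (hsupp : f (({μ} + C)ᶜ) = 0)
    (ν : EuclideanSpace ℝ (Fin n)) (hν : ν ≠ 0)
    (hinv : Measure.map (fun x => x + ν) f = f) :
    f = 0 :=
  measure_in_pointed_cone_translation_invariant_eq_zero_general f C hcone hclosed hpointed μ hsupp ν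
    hν hinv
end

section
/- Let P = {λ₁,…,λ_k} be linearly independent vectors in ℝⁿ and μ ∈ ℝⁿ. Applying the composite differencing operator ∂_{λ₁}∘⋯∘∂_{λ_k} to the cone measure cone(μ, P) yields the k-dimensional Lebesgue measure on the half-open parallelepiped {μ + Σ t_i λ_i : 0 ≤ t_i < 1}, suitably normalized; in particular the result is a compactly supported measure. -/
/-!
Pull everything back along `φ x = μ + Σ xᵢ λᵢ`. Translating `φ₊(Lebesgue on the orthant)` by
`Σ_{i∈S} λᵢ` is `φ₊` of Lebesgue measure on the orthant moved to the cube vertex `𝟙_S`, so the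
identity comes from one between restrictions of Lebesgue measure on `ℝ^k`, and that one holds
pointwise for the densities: a point `x ≥ 0` lies in the orthant at `𝟙_S` iff
`S ⊆ T = {i | 1 ≤ xᵢ}`, and `Σ_{S ⊆ T} (-1)^|S|` is `1` when `T = ∅`, i.e. when `x` lies in the
half-open unit cube, and `0` otherwise.
-/

open MeasureTheory Set Finset

theorem Finset.card_powerset_filter_even {α : Type*} [DecidableEq α] (T : Finset α) :
    #{S ∈ T.powerset | Even #S} = (if T = ∅ then 1 else 0) + #{S ∈ T.powerset | ¬Even #S} := by
  have h := T.sum_powerset_neg_one_pow_card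
  rw [← sum_filter_add_sum_filter_not T.powerset (fun S => Even #S),
    sum_congr rfl fun S hS => (mem_filter.1 hS).2.neg_one_pow,
    sum_congr rfl fun S hS => (Nat.not_even_iff_odd.1 (mem_filter.1 hS).2).neg_one_pow] at h
  simp only [sum_const, nsmul_eq_mul, mul_one, mul_neg_one] at h
  split_ifs at h ⊢ <;> omega

variable {ι : Type*}

noncomputable def cubeVertex (S : Finset ι) : ι → ℝ := (S : Set ι).indicator 1

theorem cubeVertex_nonneg (S : Finset ι) : 0 ≤ cubeVertex S :=
  Set.indicator_nonneg fun _ _ => zero_le_one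

theorem cubeVertex_le_iff [Fintype ι] {S : Finset ι} {x : ι → ℝ} (hx : 0 ≤ x) :
    cubeVertex S ≤ x ↔ S ⊆ ({i | 1 ≤ x i} : Finset ι) := by
  classical
  simp only [Pi.le_def, cubeVertex, Set.indicator_apply, mem_coe, Pi.one_apply, subset_iff,
    mem_filter, Finset.mem_univ, true_and]
  exact ⟨fun h i hi => by simpa [hi] using h i,
    fun h i => by split_ifs with hi; exacts [h hi, hx i]⟩

theorem sum_cubeVertex_smul [Fintype ι] {E : Type*} [AddCommMonoid E] [Module ℝ E]
    (S : Finset ι) (v : ι → E) : ∑ i, cubeVertex S i • v i = ∑ i ∈ S, v i := by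
  classical
  simp [cubeVertex, Set.indicator_apply, ite_smul]

theorem sum_indicator_Ici_cubeVertex_even [Fintype ι] [DecidableEq ι] {M : Type*}
    [AddCommMonoidWithOne M] (x : ι → ℝ) :
    ∑ S ∈ (univ : Finset ι).powerset.filter (fun S => Even S.card),
        (Ici (cubeVertex S)).indicator (1 : (ι → ℝ) → M) x
      = (univ.pi fun _ => Ico (0 : ℝ) 1).indicator 1 x
        + ∑ S ∈ (univ : Finset ι).powerset.filter (fun S => ¬ Even S.card),
            (Ici (cubeVertex S)).indicator 1 x := by
  classical
  simp only [Set.indicator_apply, Pi.one_apply, Set.mem_Ici, sum_boole, Set.mem_univ_pi,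
    Set.mem_Ico]
  by_cases hx : 0 ≤ x
  · set T : Finset ι := {i | 1 ≤ x i}
    have hbox : (∀ i, 0 ≤ x i ∧ x i < 1) ↔ T = ∅ := by
      simpa [T, Finset.eq_empty_iff_forall_notMem] using
        forall_congr' fun i => and_iff_right (hx i)
    have hpow (p : Finset ι → Prop) [DecidablePred p] :
        {S ∈ (univ : Finset ι).powerset | p S ∧ cubeVertex S ≤ x} = {S ∈ T.powerset | p S} := by
      ext S; simp [cubeVertex_le_iff hx, T, and_comm]
    simp only [filter_filter, hpow, hbox]
    rw [T.card_powerset_filter_even, Nat.cast_add, Nat.cast_ite, Nat.cast_one, Nat.cast_zero]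
  · have hbox : ¬ ∀ i, 0 ≤ x i ∧ x i < 1 := fun h => hx fun i => (h i).1
    have hvert (S : Finset ι) : ¬ cubeVertex S ≤ x := fun h => hx ((cubeVertex_nonneg S).trans h)
    simp [hbox, hvert]

theorem sum_restrict_Ici_cubeVertex_even [Fintype ι] [DecidableEq ι] (ν : Measure (ι → ℝ)) :
    ∑ S ∈ (univ : Finset ι).powerset.filter (fun S => Even S.card), ν.restrict (Ici (cubeVertex S))
      = ν.restrict (univ.pi fun _ => Ico 0 1)
        + ∑ S ∈ (univ : Finset ι).powerset.filter (fun S => ¬ Even S.card),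
            ν.restrict (Ici (cubeVertex S)) := by
  have restrict_eq_lintegral {C : Set (ι → ℝ)} (hC : MeasurableSet C) {B : Set (ι → ℝ)}
      (hB : MeasurableSet B) : ν.restrict C B = ∫⁻ x, C.indicator 1 x ∂ν.restrict B := by
    rw [lintegral_indicator_one hC, Measure.restrict_apply hB, Measure.restrict_apply' hB,
      inter_comm]
  ext B hB
  simp only [Measure.finsetSum_apply, Measure.add_apply,
    restrict_eq_lintegral measurableSet_Ici hB,
    restrict_eq_lintegral (MeasurableSet.univ_pi fun _ => measurableSet_Ico) hB]
  rw [← lintegral_finsetSum _ fun S _ => measurable_one.indicator measurableSet_Ici,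
    ← lintegral_finsetSum _ fun S _ => measurable_one.indicator measurableSet_Ici,
    ← lintegral_add_left (measurable_one.indicator
      (MeasurableSet.univ_pi fun _ => measurableSet_Ico))]
  exact lintegral_congr sum_indicator_Ici_cubeVertex_even

theorem map_add_sum_map_restrict_Ici [Fintype ι] {E : Type*} [NormedAddCommGroup E]
    [NormedSpace ℝ E] [MeasurableSpace E] [BorelSpace E] (ν : Measure (ι → ℝ))
    [ν.IsAddRightInvariant] (μ : E) (lam : ι → E) (S : Finset ι) :
    Measure.map (fun y => y + ∑ i ∈ S, lam i)
        (Measure.map (fun x : ι → ℝ => μ + ∑ i, x i • lam i) (ν.restrict (Ici 0)))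
      = Measure.map (fun x : ι → ℝ => μ + ∑ i, x i • lam i) (ν.restrict (Ici (cubeVertex S))) := by
  have hφ : Measurable fun x : ι → ℝ => μ + ∑ i, x i • lam i :=
    (by fun_prop : Continuous fun x : ι → ℝ => μ + ∑ i, x i • lam i).measurable
  have hshift : (fun y => y + ∑ i ∈ S, lam i) ∘ (fun x : ι → ℝ => μ + ∑ i, x i • lam i)
      = (fun x : ι → ℝ => μ + ∑ i, x i • lam i) ∘ (· + cubeVertex S) := by
    ext x
    simp [add_smul, sum_add_distrib, sum_cubeVertex_smul, add_assoc]
  rw [Measure.map_map (measurable_add_const _) hφ, hshift,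
    ← Measure.map_map hφ (measurable_add_const _)]
  conv_rhs => rw [← map_add_right_eq_self ν (cubeVertex S),
    Measure.restrict_map (measurable_add_const _) measurableSet_Ici, preimage_add_const_Ici,
    sub_self]

theorem exists_isCompact_map_restrict_compl_eq_zero {X Y : Type*} [TopologicalSpace X]
    [MeasurableSpace X] [OpensMeasurableSpace X] [TopologicalSpace Y] [T2Space Y]
    [MeasurableSpace Y] [BorelSpace Y] {f : X → Y} (hf : Continuous f) (ν : Measure X)
    {s t : Set X} (ht : IsCompact t) (hst : s ⊆ t) :
    ∃ K : Set Y, IsCompact K ∧ Measure.map f (ν.restrict s) Kᶜ = 0 := by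
  refine ⟨f '' t, ht.image hf, ?_⟩
  have hK : MeasurableSet (f '' t)ᶜ := (ht.image hf).isClosed.measurableSet.compl
  rw [Measure.map_apply hf.measurable hK, Measure.restrict_apply (hf.measurable hK)]
  exact measure_mono_null (fun x hx => hx.1 ⟨x, hst hx.2, rfl⟩) measure_empty

theorem cone_iterated_differencing_general {n k : ℕ}
    (lam : Fin k → EuclideanSpace ℝ (Fin n))
    (μ : EuclideanSpace ℝ (Fin n)) :
    (∑ S ∈ (Finset.univ : Finset (Fin k)).powerset.filter (fun S => Even S.card),
        Measure.map (fun x => x + ∑ i ∈ S, lam i)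
          (Measure.map (fun x : Fin k → ℝ => μ + ∑ i, x i • lam i)
            (volume.restrict {x : Fin k → ℝ | ∀ i, 0 ≤ x i})))
      = Measure.map (fun x : Fin k → ℝ => μ + ∑ i, x i • lam i)
          (volume.restrict {x : Fin k → ℝ | ∀ i, 0 ≤ x i ∧ x i < 1})
        + (∑ S ∈ (Finset.univ : Finset (Fin k)).powerset.filter (fun S => ¬ Even S.card),
            Measure.map (fun x => x + ∑ i ∈ S, lam i)
              (Measure.map (fun x : Fin k → ℝ => μ + ∑ i, x i • lam i)
                (volume.restrict {x : Fin k → ℝ | ∀ i, 0 ≤ x i}))) ∧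
    ∃ K : Set (EuclideanSpace ℝ (Fin n)), IsCompact K ∧
      Measure.map (fun x : Fin k → ℝ => μ + ∑ i, x i • lam i)
        (volume.restrict {x : Fin k → ℝ | ∀ i, 0 ≤ x i ∧ x i < 1}) Kᶜ = 0 := by
  have hφ : Continuous fun x : Fin k → ℝ => μ + ∑ i, x i • lam i := by fun_prop
  have horthant : {x : Fin k → ℝ | ∀ i, 0 ≤ x i} = Set.Ici 0 := rfl
  have hbox : {x : Fin k → ℝ | ∀ i, 0 ≤ x i ∧ x i < 1} = univ.pi fun _ => Ico 0 1 := by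
    ext; simp
  refine ⟨?_, ?_⟩
  · simp only [horthant, map_add_sum_map_restrict_Ici, hbox]
    rw [← Measure.map_finset_sum hφ.aemeasurable, ← Measure.map_finset_sum hφ.aemeasurable,
      ← Measure.map_add _ _ hφ.measurable, sum_restrict_Ici_cubeVertex_even]
  · exact exists_isCompact_map_restrict_compl_eq_zero hφ _ isCompact_Icc
      fun x hx => ⟨fun i => (hx i).1, fun i => (hx i).2.le⟩

/-- Applying the composite differencing operator `∂_{λ₁} ∘ ⋯ ∘ ∂_{λ_k}` to the cone
measure `cone(μ, P)` for linearly independent `λ₁, …, λ_k` yields the (suitably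
normalized) Lebesgue measure on the half-open parallelepiped
`{μ + Σ tᵢ λᵢ : 0 ≤ tᵢ < 1}`, in particular a compactly supported measure.
Expanding `∏ᵢ (1 - T_{λᵢ})` and moving negative terms to the other side, this reads:
`Σ_{S even} (cone translated by Σ_{i∈S} λᵢ) = Ppd + Σ_{S odd} (cone translated by Σ_{i∈S} λᵢ)`,
where `Ppd` is the pushforward of Lebesgue measure on `[0,1)^k` under
`(tᵢ) ↦ μ + Σ tᵢ λᵢ`. -/
theorem cone_iterated_differencing {n k : ℕ}
    (lam : Fin k → EuclideanSpace ℝ (Fin n)) (hlam : LinearIndependent ℝ lam)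
    (μ : EuclideanSpace ℝ (Fin n)) :
    (∑ S ∈ (Finset.univ : Finset (Fin k)).powerset.filter (fun S => Even S.card),
        Measure.map (fun x => x + ∑ i ∈ S, lam i)
          (Measure.map (fun x : Fin k → ℝ => μ + ∑ i, x i • lam i)
            (volume.restrict {x : Fin k → ℝ | ∀ i, 0 ≤ x i})))
      = Measure.map (fun x : Fin k → ℝ => μ + ∑ i, x i • lam i)
          (volume.restrict {x : Fin k → ℝ | ∀ i, 0 ≤ x i ∧ x i < 1})
        + (∑ S ∈ (Finset.univ : Finset (Fin k)).powerset.filter (fun S => ¬ Even S.card),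
            Measure.map (fun x => x + ∑ i ∈ S, lam i)
              (Measure.map (fun x : Fin k → ℝ => μ + ∑ i, x i • lam i)
                (volume.restrict {x : Fin k → ℝ | ∀ i, 0 ≤ x i}))) ∧
    ∃ K : Set (EuclideanSpace ℝ (Fin n)), IsCompact K ∧
      Measure.map (fun x : Fin k → ℝ => μ + ∑ i, x i • lam i)
        (volume.restrict {x : Fin k → ℝ | ∀ i, 0 ≤ x i ∧ x i < 1}) Kᶜ = 0 :=
  cone_iterated_differencing_general lam μ
end
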